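/- arXiv:2505.18332 — 4 statements merged into one kernel-verified Lean document; each statement's English description precedes it below -/
import Mathlib

section
/- Let d ≥ 1, let k > 0, and let μ be a probability measure on Euclidean space ℝ^d that is rotation-invariant, i.e., invariant under pushforward by every linear isometry (orthogonal transformation) of ℝ^d. Then for all vectors x, y ∈ ℝ^d, the μ-measure of the set of w ∈ ℝ^d satisfying |∑_{i=1}^d w_i x_i − ∑_{i=1}^d w_i y_i| ≥ k · ∑_{i=1}^d |x_i − y_i| is at least the μ-measure of the set of w ∈ ℝ^d satisfying |w_1| ≥ k·√d. -/
open MeasureTheory ProbabilityTheory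
open scoped ENNReal NNReal RealInnerProductSpace BigOperators

theorem random_1d_projection_separates
    (d : ℕ) (hd : 1 ≤ d) (k : ℝ) (hk : 0 < k)
    (μ : Measure (EuclideanSpace ℝ (Fin d))) [IsProbabilityMeasure μ]
    (hrot : ∀ Q : EuclideanSpace ℝ (Fin d) ≃ₗᵢ[ℝ] EuclideanSpace ℝ (Fin d),
      μ.map Q = μ)
    (x y : EuclideanSpace ℝ (Fin d)) :
    μ {w : EuclideanSpace ℝ (Fin d) |
        k * ∑ i, |x i - y i| ≤ |(∑ i, w i * x i) - ∑ i, w i * y i|}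
      ≥ μ {w : EuclideanSpace ℝ (Fin d) | k * Real.sqrt d ≤ |w ⟨0, by omega⟩|} := by
  classical
  set v : EuclideanSpace ℝ (Fin d) := x - y with hv
  have hvi : ∀ i, v i = x i - y i := fun i => rfl
  have hsum : ∀ w : EuclideanSpace ℝ (Fin d),
      (∑ i, w i * x i) - ∑ i, w i * y i = ⟪w, v⟫ := by
    intro w
    rw [PiLp.inner_apply, ← Finset.sum_sub_distrib]
    refine Finset.sum_congr rfl fun i _ => ?_
    simp [hvi, mul_sub]
    ring
  by_cases hv0 : v = 0
  · have hxy : ∀ i, x i = y i := by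
      intro i
      have h : x i - y i = 0 := by rw [← hvi i, hv0]; rfl
      linarith
    have hset : {w : EuclideanSpace ℝ (Fin d) |
        k * ∑ i, |x i - y i| ≤ |(∑ i, w i * x i) - ∑ i, w i * y i|} = Set.univ := by
      ext w
      simp [hxy]
    rw [hset]
    calc μ _ ≤ 1 := prob_le_one
      _ = μ Set.univ := (measure_univ).symm
  · have hvnorm : (0:ℝ) < ‖v‖ := norm_pos_iff.mpr hv0
    set i0 : Fin d := ⟨0, by omega⟩
    set u : EuclideanSpace ℝ (Fin d) := ‖v‖⁻¹ • v with hu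
    have hunorm : ‖u‖ = 1 := by
      simp [hu, norm_smul, abs_of_pos (inv_pos.mpr hvnorm),
        inv_mul_cancel₀ hvnorm.ne']
    have hcard : Module.finrank ℝ (EuclideanSpace ℝ (Fin d)) = Fintype.card (Fin d) := by
      simp [finrank_euclideanSpace_fin]
    have horth : Orthonormal ℝ (({i0} : Set (Fin d)).restrict (fun _ => u)) := by
      constructor
      · intro i
        exact hunorm
      · intro i j hij
        exact absurd (Subsingleton.elim i j) hij
    obtain ⟨b, hb⟩ := horth.exists_orthonormalBasis_extension_of_card_eq hcard
    have hbi0 : b i0 = u := hb i0 rfl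
    set Q : EuclideanSpace ℝ (Fin d) ≃ₗᵢ[ℝ] EuclideanSpace ℝ (Fin d) :=
      b.repr.symm with hQ
    have hA : MeasurableSet {w : EuclideanSpace ℝ (Fin d) |
        k * ∑ i, |x i - y i| ≤ |(∑ i, w i * x i) - ∑ i, w i * y i|} := by
      have hcont : Continuous fun w : EuclideanSpace ℝ (Fin d) =>
          |(∑ i, w i * x i) - ∑ i, w i * y i| := by
        fun_prop
      exact measurableSet_le measurable_const hcont.measurable
    have hmap : μ {w : EuclideanSpace ℝ (Fin d) |
        k * ∑ i, |x i - y i| ≤ |(∑ i, w i * x i) - ∑ i, w i * y i|}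
        = μ ((Q : EuclideanSpace ℝ (Fin d) → EuclideanSpace ℝ (Fin d)) ⁻¹'
          {w : EuclideanSpace ℝ (Fin d) |
          k * ∑ i, |x i - y i| ≤ |(∑ i, w i * x i) - ∑ i, w i * y i|}) := by
      conv_lhs => rw [← hrot Q]
      exact Measure.map_apply Q.continuous.measurable hA
    rw [hmap]
    refine measure_mono ?_
    intro w hw
    simp only [Set.mem_setOf_eq, Set.mem_preimage] at hw ⊢
    have hQv : Q.symm v = ‖v‖ • EuclideanSpace.single i0 (1:ℝ) := by
      have hvu : v = ‖v‖ • u := by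
        rw [hu, smul_smul, mul_inv_cancel₀ hvnorm.ne', one_smul]
      rw [hQ, LinearIsometryEquiv.symm_symm]
      conv_lhs => rw [hvu]
      rw [_root_.map_smul, ← hbi0, b.repr_self i0]
    have hinner : ⟪(Q w : EuclideanSpace ℝ (Fin d)), v⟫ = ‖v‖ * w i0 := by
      conv_lhs => rw [← Q.apply_symm_apply v]
      rw [Q.inner_map_map, hQv, real_inner_smul_right]
      congr 1
      simp [PiLp.inner_apply, EuclideanSpace.single_apply]
    have hl1 : ∑ i, |v i| ≤ Real.sqrt d * ‖v‖ := by
      have h1 : (∑ i, |v i|) ^ 2 ≤ (d : ℝ) * ∑ i, |v i| ^ 2 := by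
        have := sq_sum_le_card_mul_sum_sq (s := Finset.univ)
          (f := fun i : Fin d => |v i|)
        simpa using this
      have h2 : ∑ i, |v i| ^ 2 = ‖v‖ ^ 2 := by
        rw [EuclideanSpace.norm_eq, Real.sq_sqrt (by positivity)]
        simp [Real.norm_eq_abs]
      have h3 : (∑ i, |v i|) ^ 2 ≤ (Real.sqrt d * ‖v‖) ^ 2 := by
        rw [mul_pow, Real.sq_sqrt (Nat.cast_nonneg d)]
        rw [h2] at h1
        exact h1
      have h4 : (0:ℝ) ≤ ∑ i, |v i| := Finset.sum_nonneg fun i _ => abs_nonneg _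
      calc ∑ i, |v i| = Real.sqrt ((∑ i, |v i|) ^ 2) := (Real.sqrt_sq h4).symm
        _ ≤ Real.sqrt ((Real.sqrt d * ‖v‖) ^ 2) := Real.sqrt_le_sqrt h3
        _ = Real.sqrt d * ‖v‖ := Real.sqrt_sq (by positivity)
    have hsum2 : ∑ i, |x i - y i| = ∑ i, |v i| :=
      Finset.sum_congr rfl fun i _ => by rw [hvi]
    rw [hsum (Q w), hinner, hsum2, abs_mul, abs_of_pos hvnorm]
    calc k * ∑ i, |v i| ≤ k * (Real.sqrt d * ‖v‖) :=
          mul_le_mul_of_nonneg_left hl1 hk.le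
      _ = (k * Real.sqrt d) * ‖v‖ := by ring
      _ ≤ |w i0| * ‖v‖ := mul_le_mul_of_nonneg_right hw hvnorm.le
      _ = ‖v‖ * |w i0| := mul_comm _ _
end

section
/- Let d ≥ 1, σ > 0, k > 0, and let μ be the product measure on ℝ^d of d independent copies of the Gaussian measure N(0, σ²). Then for all vectors x, y ∈ ℝ^d, the μ-measure of the set of w ∈ ℝ^d satisfying |∑_{i=1}^d w_i x_i − ∑_{i=1}^d w_i y_i| ≥ k · ∑_{i=1}^d |x_i − y_i| is at least 2 − 2·Φ(k·√d/σ), where Φ is the cumulative distribution function of the standard normal distribution N(0,1). -/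
open MeasureTheory ProbabilityTheory Real
open scoped ENNReal NNReal BigOperators

lemma pdf_conv_aux {v₁ v₂ : ℝ≥0} (h₁ : v₁ ≠ 0) (h₂ : v₂ ≠ 0) (x y : ℝ) :
    gaussianPDFReal 0 v₁ x * gaussianPDFReal x v₂ y
      = gaussianPDFReal 0 (v₁ + v₂) y
        * gaussianPDFReal ((v₁ : ℝ) * y / ((v₁ : ℝ) + v₂)) (v₁ * v₂ / (v₁ + v₂)) x := by
  have a0 : (0:ℝ) < v₁ := lt_of_le_of_ne (v₁.coe_nonneg) (by exact_mod_cast (Ne.symm h₁))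
  have b0 : (0:ℝ) < v₂ := lt_of_le_of_ne (v₂.coe_nonneg) (by exact_mod_cast (Ne.symm h₂))
  set a : ℝ := (v₁ : ℝ)
  set b : ℝ := (v₂ : ℝ)
  have hab : (0:ℝ) < a + b := by positivity
  have hcast1 : ((v₁ + v₂ : ℝ≥0) : ℝ) = a + b := by push_cast; ring
  have hcast2 : ((v₁ * v₂ / (v₁ + v₂) : ℝ≥0) : ℝ) = a * b / (a + b) := by push_cast; ring
  simp only [gaussianPDFReal, hcast1, hcast2]
  have hπ : (0:ℝ) < 2 * π := by positivity
  -- constants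
  have hconst : (√(2 * π * a))⁻¹ * (√(2 * π * b))⁻¹
      = (√(2 * π * (a + b)))⁻¹ * (√(2 * π * (a * b / (a + b))))⁻¹ := by
    rw [← mul_inv, ← mul_inv, ← Real.sqrt_mul (by positivity), ← Real.sqrt_mul (by positivity)]
    congr 1
    field_simp
  have hexp : rexp (-(x - 0) ^ 2 / (2 * a)) * rexp (-(y - x) ^ 2 / (2 * b))
      = rexp (-(y - 0) ^ 2 / (2 * (a + b)))
        * rexp (-(x - a * y / (a + b)) ^ 2 / (2 * (a * b / (a + b)))) := by
    rw [← Real.exp_add, ← Real.exp_add]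
    congr 1
    field_simp
    ring
  calc (√(2 * π * a))⁻¹ * rexp (-(x - 0) ^ 2 / (2 * a))
        * ((√(2 * π * b))⁻¹ * rexp (-(y - x) ^ 2 / (2 * b)))
      = ((√(2 * π * a))⁻¹ * (√(2 * π * b))⁻¹)
        * (rexp (-(x - 0) ^ 2 / (2 * a)) * rexp (-(y - x) ^ 2 / (2 * b))) := by ring
    _ = _ := by rw [hconst, hexp]; ring

lemma gaussian_conv (v₁ v₂ : ℝ≥0) :
    Measure.map (fun p : ℝ × ℝ => p.1 + p.2)
      ((gaussianReal 0 v₁).prod (gaussianReal 0 v₂)) = gaussianReal 0 (v₁ + v₂) := by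
  by_cases h₁ : v₁ = 0
  · subst h₁
    rw [gaussianReal_zero_var, Measure.dirac_prod, Measure.map_map (by fun_prop) (by fun_prop)]
    simp [Function.comp_def]
  by_cases h₂ : v₂ = 0
  · subst h₂
    rw [gaussianReal_zero_var, Measure.prod_dirac, Measure.map_map (by fun_prop) (by fun_prop)]
    simp [Function.comp_def]
  have hsum : v₁ + v₂ ≠ 0 := by simp [h₁, h₂]
  ext s hs
  rw [Measure.map_apply (by fun_prop) hs,
    Measure.prod_apply (measurable_add hs)]
  have hslice : ∀ x : ℝ, (gaussianReal 0 v₂) (Prod.mk x ⁻¹' ((fun p : ℝ × ℝ => p.1 + p.2) ⁻¹' s))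
      = ∫⁻ y in s, gaussianPDF x v₂ y := by
    intro x
    have : Prod.mk x ⁻¹' ((fun p : ℝ × ℝ => p.1 + p.2) ⁻¹' s) = (fun y => x + y) ⁻¹' s := rfl
    rw [this, ← Measure.map_apply (by fun_prop) hs, gaussianReal_map_const_add,
      zero_add, gaussianReal_apply _ h₂]
  simp_rw [hslice]
  have hm2 : Measurable fun p : ℝ × ℝ => gaussianPDF p.1 v₂ p.2 := by
    unfold gaussianPDF gaussianPDFReal
    apply Measurable.ennreal_ofReal
    apply Measurable.const_mul
    exact (Real.measurable_exp.comp (by fun_prop))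
  have hm1 : Measurable fun x : ℝ => ∫⁻ y in s, gaussianPDF x v₂ y :=
    Measurable.lintegral_prod_right' (f := fun p : ℝ × ℝ => gaussianPDF p.1 v₂ p.2) hm2
  rw [gaussianReal_of_var_ne_zero _ h₁, lintegral_withDensity_eq_lintegral_mul _
    (measurable_gaussianPDF _ _) hm1]
  have swap : ∫⁻ x, gaussianPDF 0 v₁ x * ∫⁻ y in s, gaussianPDF x v₂ y
      = ∫⁻ y in s, ∫⁻ x, gaussianPDF 0 v₁ x * gaussianPDF x v₂ y := by
    have : ∀ x : ℝ, gaussianPDF 0 v₁ x * ∫⁻ y in s, gaussianPDF x v₂ y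
        = ∫⁻ y in s, gaussianPDF 0 v₁ x * gaussianPDF x v₂ y := fun x =>
      (lintegral_const_mul (gaussianPDF 0 v₁ x) (hm2.comp measurable_prodMk_left)).symm
    simp_rw [this]
    rw [lintegral_lintegral_swap]
    exact (((measurable_gaussianPDF 0 v₁).comp measurable_fst).mul hm2).aemeasurable
  simp only [Pi.mul_apply]
  rw [swap, gaussianReal_apply _ hsum]
  refine setLIntegral_congr_fun hs (fun y _ => ?_)
  have inner : ∀ x : ℝ, gaussianPDF 0 v₁ x * gaussianPDF x v₂ y
      = gaussianPDF 0 (v₁ + v₂) y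
        * gaussianPDF ((v₁ : ℝ) * y / ((v₁ : ℝ) + v₂)) (v₁ * v₂ / (v₁ + v₂)) x := by
    intro x
    unfold gaussianPDF
    rw [← ENNReal.ofReal_mul (gaussianPDFReal_nonneg _ _ _),
      ← ENNReal.ofReal_mul (gaussianPDFReal_nonneg _ _ _), pdf_conv_aux h₁ h₂]
  simp_rw [inner]
  rw [lintegral_const_mul _ (measurable_gaussianPDF _ _),
    lintegral_gaussianPDF_eq_one _ (by positivity), mul_one]

lemma gaussian_map_sum (v : ℝ≥0) : ∀ (n : ℕ) (c : Fin n → ℝ),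
    Measure.map (fun w : Fin n → ℝ => ∑ i, w i * c i)
        (Measure.pi fun _ : Fin n => gaussianReal 0 v)
      = gaussianReal 0 (∑ i, ((c i)^2).toNNReal * v) := by
  intro n
  induction n with
  | zero =>
    intro c
    rw [show (fun w : Fin 0 → ℝ => ∑ i, w i * c i) = fun _ => (0:ℝ) by
      funext w; simp, Measure.map_const]
    simp [gaussianReal_zero_var]
  | succ n ih =>
    intro c
    have hmp := measurePreserving_piFinSuccAbove (fun _ : Fin (n+1) => gaussianReal 0 v) 0
    set e := MeasurableEquiv.piFinSuccAbove (fun _ : Fin (n+1) => ℝ) 0 with he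
    set F : ℝ × (Fin n → ℝ) → ℝ := (fun q : ℝ × ℝ => q.1 + q.2) ∘
        (Prod.map (fun a : ℝ => a * c 0) (fun w : Fin n → ℝ => ∑ j, w j * c j.succ)) with hF
    have hFmeas : Measurable F := by
      apply Measurable.comp (by fun_prop)
      exact Measurable.prodMap (by fun_prop) (by fun_prop)
    have hS : (fun w : Fin (n+1) → ℝ => ∑ i, w i * c i) = F ∘ e := by
      funext w
      simp only [Function.comp_apply, hF, he, MeasurableEquiv.piFinSuccAbove_apply,
        Prod.map_apply, Fin.zero_succAbove, Fin.insertNthEquiv,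
        Equiv.coe_fn_symm_mk, Fin.insertNth_apply_same]
      rw [Fin.sum_univ_succ]
      simp [Fin.zero_succAbove, Fin.tail]
    rw [hS, ← Measure.map_map hFmeas e.measurable, hmp.map_eq, hF,
      ← Measure.map_map (by fun_prop) (Measurable.prodMap (by fun_prop) (by fun_prop)),
      ← Measure.map_prod_map _ _ (by fun_prop) (by fun_prop),
      ih (fun j => c j.succ), gaussianReal_map_mul_const (c 0)]
    have : (gaussianReal (c 0 * 0) (NNReal.mk ((c 0)^2) (sq_nonneg _) * v)) =
        gaussianReal 0 (((c 0)^2).toNNReal * v) := by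
      rw [mul_zero]
      congr 1
      ext
      simp [Real.coe_toNNReal _ (sq_nonneg (c 0))]
    rw [this, gaussian_conv, Fin.sum_univ_succ]

lemma gaussian_neg_map :
    Measure.map (fun z : ℝ => -z) (gaussianReal 0 1) = gaussianReal 0 1 := by
  rw [show (fun z : ℝ => -z) = ((-1 : ℝ) * ·) by funext z; ring,
    gaussianReal_map_const_mul (-1)]
  norm_num

lemma tail_bound (t : ℝ) (ht : 0 < t) :
    ENNReal.ofReal (2 - 2 * cdf (gaussianReal 0 1) t)
      ≤ gaussianReal 0 1 (Set.Iic (-t) ∪ Set.Ici t) := by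
  have hsym : gaussianReal 0 1 (Set.Iic (-t)) = gaussianReal 0 1 (Set.Ici t) := by
    conv_lhs => rw [← gaussian_neg_map]
    rw [Measure.map_apply (by fun_prop) measurableSet_Iic]
    congr 1
    ext z
    simp
  have hone : (1:ℝ≥0∞) ≤ ENNReal.ofReal (cdf (gaussianReal 0 1) t) + gaussianReal 0 1 (Set.Ici t) := by
    rw [ofReal_cdf]
    calc (1:ℝ≥0∞) = gaussianReal 0 1 Set.univ := measure_univ.symm
      _ = gaussianReal 0 1 (Set.Iic t ∪ Set.Ici t) := by rw [Set.Iic_union_Ici]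
      _ ≤ _ := measure_union_le _ _
  have hge : ENNReal.ofReal (1 - cdf (gaussianReal 0 1) t) ≤ gaussianReal 0 1 (Set.Ici t) := by
    rw [ENNReal.ofReal_sub _ (cdf_nonneg _ t), ENNReal.ofReal_one]
    exact tsub_le_iff_right.mpr (by rwa [add_comm] at hone)
  have hunion : gaussianReal 0 1 (Set.Iic (-t) ∪ Set.Ici t) = gaussianReal 0 1 (Set.Iic (-t)) + gaussianReal 0 1 (Set.Ici t) := by
    apply measure_union _ measurableSet_Ici
    exact Set.Iic_disjoint_Ici.mpr (by linarith)
  calc ENNReal.ofReal (2 - 2 * cdf (gaussianReal 0 1) t)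
      = ENNReal.ofReal ((1 - cdf (gaussianReal 0 1) t) + (1 - cdf (gaussianReal 0 1) t)) := by ring_nf
    _ ≤ ENNReal.ofReal (1 - cdf (gaussianReal 0 1) t) + ENNReal.ofReal (1 - cdf (gaussianReal 0 1) t) :=
        ENNReal.ofReal_add_le
    _ ≤ gaussianReal 0 1 (Set.Iic (-t)) + gaussianReal 0 1 (Set.Ici t) := by rw [hsym]; exact add_le_add hge hge
    _ = _ := hunion.symm

theorem gaussian_1d_projection_separates
    (d : ℕ) (hd : 1 ≤ d) (σ k : ℝ) (hσ : 0 < σ) (hk : 0 < k)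
    (x y : Fin d → ℝ) :
    ENNReal.ofReal (2 - 2 * cdf (gaussianReal 0 1) (k * Real.sqrt d / σ))
      ≤ (Measure.pi fun _ : Fin d => gaussianReal 0 (σ ^ 2).toNNReal)
          {w : Fin d → ℝ |
            k * ∑ i, |x i - y i| ≤ |(∑ i, w i * x i) - ∑ i, w i * y i|} := by
  set c : Fin d → ℝ := fun i => x i - y i with hc
  set S : ℝ := ∑ i, |c i| with hS
  set t : ℝ := k * Real.sqrt d / σ with htdef
  have hd0 : (0:ℝ) < Real.sqrt d := Real.sqrt_pos.mpr (by exact_mod_cast hd)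
  have ht : 0 < t := by positivity
  have hset : {w : Fin d → ℝ |
        k * ∑ i, |x i - y i| ≤ |(∑ i, w i * x i) - ∑ i, w i * y i|}
      = (fun w : Fin d → ℝ => ∑ i, w i * c i) ⁻¹' {z : ℝ | k * S ≤ |z|} := by
    ext w
    simp only [Set.mem_setOf_eq, Set.mem_preimage, hS, hc, ← Finset.sum_sub_distrib, mul_sub]
  rw [hset]
  have hSnn : 0 ≤ S := Finset.sum_nonneg fun i _ => abs_nonneg _
  have hmeasf : Measurable fun w : Fin d → ℝ => ∑ i, w i * c i := by fun_prop
  have hmeasA : MeasurableSet {z : ℝ | k * S ≤ |z|} :=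
    measurableSet_le measurable_const (by fun_prop)
  rw [← Measure.map_apply hmeasf hmeasA, gaussian_map_sum]
  rcases eq_or_lt_of_le hSnn with h0 | hSpos
  · -- S = 0, event is everything
    have : {z : ℝ | k * S ≤ |z|} = Set.univ := by
      ext z; simp [← h0, abs_nonneg]
    rw [this]
    simp only [measure_univ]
    exact le_trans (tail_bound t ht) prob_le_one
  · -- S > 0
    set L : ℝ := Real.sqrt (∑ i, (c i)^2) with hL
    have hL2 : L^2 = ∑ i, (c i)^2 := Real.sq_sqrt (Finset.sum_nonneg fun i _ => sq_nonneg _)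
    have hdsq : (Real.sqrt d)^2 = (d:ℝ) := Real.sq_sqrt (by positivity)
    have hsum2 : (0:ℝ) < ∑ i, (c i)^2 := by
      rcases lt_or_eq_of_le (Finset.sum_nonneg fun i _ => sq_nonneg (c i)) with h | h
      · exact h
      · exfalso
        have hall := (Finset.sum_eq_zero_iff_of_nonneg
          (fun i _ => sq_nonneg (c i))).mp h.symm
        have hS0 : S = 0 := Finset.sum_eq_zero fun i _ => by
          have h2 := hall i (Finset.mem_univ i)
          have : c i = 0 := by
            have := sq_eq_zero_iff.mp h2
            exact this
          simp [this]
        linarith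
    have hLpos : 0 < L := Real.sqrt_pos.mpr hsum2
    set τ : ℝ := σ * L with hτ
    have hτpos : 0 < τ := by positivity
    have hmap : Measure.map (τ * ·) (gaussianReal 0 1)
        = gaussianReal 0 (∑ i, ((c i)^2).toNNReal * (σ^2).toNNReal) := by
      rw [gaussianReal_map_const_mul, mul_zero]
      congr 1
      apply NNReal.coe_injective
      push_cast
      rw [Finset.sum_congr rfl fun i (_ : i ∈ Finset.univ) => by
        rw [Real.coe_toNNReal _ (sq_nonneg (c i)), Real.coe_toNNReal _ (sq_nonneg σ)]]
      have hτ2 : τ^2 = σ^2 * L^2 := by ring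
      rw [mul_one, hτ2, hL2, Finset.mul_sum]
      exact Finset.sum_congr rfl fun i _ => by ring
    rw [← hmap, Measure.map_apply (by fun_prop) hmeasA]
    refine le_trans (tail_bound t ht) (measure_mono ?_)
    have hCS : S^2 ≤ (d:ℝ) * ∑ i, (c i)^2 := by
      have h1 := sq_sum_le_card_mul_sum_sq (s := (Finset.univ : Finset (Fin d)))
        (f := fun i => |c i|)
      simpa [sq_abs, hS] using h1
    have hSle : S ≤ Real.sqrt d * L := by
      nlinarith [sq_nonneg (Real.sqrt d * L - S), mul_pos hd0 hLpos]
    have hkey : k * S ≤ t * τ := by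
      have : t * τ = k * (Real.sqrt d * L) := by
        rw [htdef, hτ]; field_simp
      rw [this]
      exact mul_le_mul_of_nonneg_left hSle hk.le
    intro u hu
    simp only [Set.mem_preimage, Set.mem_setOf_eq]
    have habs : t ≤ |u| := by
      rcases hu with hu | hu
      · exact le_trans (le_neg_of_le_neg hu) (neg_le_abs u)
      · exact le_trans hu (le_abs_self u)
    calc k * S ≤ t * τ := hkey
      _ ≤ |u| * τ := mul_le_mul_of_nonneg_right habs hτpos.le
      _ = |τ * u| := by rw [abs_mul, abs_of_pos hτpos]; ring
end

section
/- Let (Ω, ℙ) be a probability space carrying independent random variables W and ε, each with law N(0,1), let 0 < ρ < 1 and δ > 0, and define X = ρ·W + √(1 − ρ²)·ε. Then for every measurable function f : ℝ → ℝ, ℙ({ω : |W(ω) − f(X(ω))| ≤ δ}) ≤ 2·Φ(δ/√(1 − ρ²)) − 1, and this bound is strictly less than 1. -/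
open MeasureTheory ProbabilityTheory Set Real
open scoped ENNReal NNReal

noncomputable section

namespace RPBaux

local notation "φ" => gaussianPDFReal 0 1
local notation "γ" => gaussianReal 0 1

lemma phi_int : Integrable φ := integrable_gaussianPDFReal 0 1

lemma phi_ii (a b : ℝ) : IntervalIntegrable φ volume a b :=
  (integrable_gaussianPDFReal 0 1).intervalIntegrable

lemma phi_nonneg (x : ℝ) : 0 ≤ φ x := gaussianPDFReal_nonneg 0 1 x

lemma phi_even (x : ℝ) : φ (-x) = φ x := by
  simp [gaussianPDFReal]

lemma phi_anti {x y : ℝ} (h : |x| ≤ |y|) : φ y ≤ φ x := by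
  have h2 : x ^ 2 ≤ y ^ 2 := by
    calc x ^ 2 = |x| ^ 2 := (sq_abs x).symm
    _ ≤ |y| ^ 2 := by gcongr
    _ = y ^ 2 := sq_abs y
  simp only [gaussianPDFReal, NNReal.coe_one, mul_one, sub_zero]
  apply mul_le_mul_of_nonneg_left _ (by positivity)
  exact Real.exp_le_exp.mpr (by linarith)

lemma shift_le_of_nonneg (c : ℝ) (hc : 0 ≤ c) {m : ℝ} (hm : 0 ≤ m) :
    ∫ x in (m - c)..(m + c), φ x ≤ ∫ x in (-c)..c, φ x := by
  have h1 : ∫ x in (-c)..(m - c), φ x = ∫ x in c..(m + c), φ (x - 2 * c) := by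
    rw [intervalIntegral.integral_comp_sub_right φ (2 * c)]
    congr 1 <;> ring
  have h2 : ∫ x in c..(m + c), φ x ≤ ∫ x in c..(m + c), φ (x - 2 * c) := by
    have hi2 : IntervalIntegrable (fun x => φ (x - 2 * c)) volume c (m + c) := by
      have := (phi_ii (-c) (m - c)).comp_sub_right (2 * c)
      simpa [show -c + 2 * c = c by ring, show m - c + 2 * c = m + c by ring] using this
    refine intervalIntegral.integral_mono_on (by linarith) (phi_ii _ _) hi2 ?_
    intro x hx
    apply phi_anti
    rw [abs_of_nonneg (by linarith [hx.1] : (0:ℝ) ≤ x)]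
    exact abs_le.mpr ⟨by linarith [hx.1], by linarith [hx.1]⟩
  have h3 := intervalIntegral.integral_add_adjacent_intervals
    (phi_ii (-c) (m - c)) (phi_ii (m - c) (m + c))
  have h4 := intervalIntegral.integral_add_adjacent_intervals
    (phi_ii (-c) c) (phi_ii c (m + c))
  linarith

lemma shift_le (c : ℝ) (hc : 0 ≤ c) (m : ℝ) :
    ∫ x in (m - c)..(m + c), φ x ≤ ∫ x in (-c)..c, φ x := by
  rcases le_or_gt 0 m with hm | hm
  · exact shift_le_of_nonneg c hc hm
  · have key : ∫ x in (m - c)..(m + c), φ x = ∫ x in ((-m) - c)..((-m) + c), φ x := by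
      have : ∫ x in ((-m) - c)..((-m) + c), φ x = ∫ x in ((-m) - c)..((-m) + c), φ (-x) := by
        simp_rw [phi_even]
      rw [this, intervalIntegral.integral_comp_neg]
      congr 1 <;> ring
    rw [key]
    exact shift_le_of_nonneg c hc (by linarith)

lemma cdf_gauss (c : ℝ) : cdf γ c = ∫ x in Iic c, φ x := by
  rw [cdf_eq_real, measureReal_def, gaussianReal_apply_eq_integral 0 one_ne_zero,
    ENNReal.toReal_ofReal (integral_nonneg fun x => phi_nonneg x)]

lemma tail_symm (c : ℝ) : ∫ x in Iic (-c), φ x = ∫ x in Ioi c, φ x := by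
  calc ∫ x in Iic (-c), φ x = ∫ x in Ioi c, φ (-x) := (integral_comp_neg_Ioi c φ).symm
  _ = ∫ x in Ioi c, φ x := by simp_rw [phi_even]

lemma total_one (c : ℝ) : (∫ x in Iic c, φ x) + ∫ x in Ioi c, φ x = 1 := by
  rw [intervalIntegral.integral_Iic_add_Ioi phi_int.integrableOn phi_int.integrableOn,
    integral_gaussianPDFReal_eq_one 0 one_ne_zero]

lemma tail_pos (c : ℝ) : 0 < ∫ x in Ioi c, φ x := by
  rw [setIntegral_pos_iff_support_of_nonneg_ae
    (Filter.Eventually.of_forall fun x => phi_nonneg x) phi_int.integrableOn]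
  have hsupp : Function.support φ = Set.univ := by
    ext x
    simp [Function.mem_support, (gaussianPDFReal_pos 0 1 x one_ne_zero).ne']
  rw [hsupp, Set.univ_inter]
  exact (isOpen_Ioi).measure_pos volume nonempty_Ioi

lemma cdf_lt_one (c : ℝ) : cdf γ c < 1 := by
  rw [cdf_gauss]
  linarith [tail_pos c, total_one c]

lemma gauss_Icc_le {c : ℝ} (hc : 0 < c) (a b : ℝ) (hab : b - a = 2 * c) :
    γ (Icc a b) ≤ ENNReal.ofReal (2 * cdf γ c - 1) := by
  rw [gaussianReal_apply_eq_integral 0 one_ne_zero]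
  apply ENNReal.ofReal_le_ofReal
  have hab' : a ≤ b := by linarith
  have key : ∫ x in Icc a b, φ x = ∫ x in a..b, φ x := by
    rw [intervalIntegral.integral_of_le hab', integral_Icc_eq_integral_Ioc]
  have hm : ∫ x in a..b, φ x ≤ ∫ x in (-c)..c, φ x := by
    have h1 : a = (a + c) - c := by ring
    have h2 : b = (a + c) + c := by linarith
    rw [h1, h2]
    exact shift_le c hc.le (a + c)
  have hval : ∫ x in (-c)..c, φ x = 2 * cdf γ c - 1 := by
    rw [← intervalIntegral.integral_Iic_sub_Iic phi_int.integrableOn phi_int.integrableOn,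
      tail_symm, cdf_gauss]
    linarith [total_one c]
  linarith

lemma gauss_prod :
    (gaussianReal 0 1).prod (gaussianReal 0 1) = (volume : Measure (ℝ × ℝ)).withDensity
      fun p => gaussianPDF 0 1 p.1 * gaussianPDF 0 1 p.2 := by
  refine Measure.prod_eq fun s t hs ht => ?_
  rw [withDensity_apply _ (hs.prod ht), Measure.volume_eq_prod, ← Measure.prod_restrict,
    lintegral_prod_mul (measurable_gaussianPDF 0 1).aemeasurable
      (measurable_gaussianPDF 0 1).aemeasurable,
    gaussianReal_apply 0 one_ne_zero, gaussianReal_apply 0 one_ne_zero]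

lemma phi_mul {a b x z : ℝ} (h : a ^ 2 + b ^ 2 = x ^ 2 + z ^ 2) : φ a * φ b = φ x * φ z := by
  simp only [gaussianPDFReal, NNReal.coe_one, mul_one, sub_zero]
  rw [mul_mul_mul_comm, ← Real.exp_add, mul_mul_mul_comm, ← Real.exp_add]
  congr 1
  field_simp
  congr 1
  linarith

def Lequiv (ρ σ : ℝ) (h : ρ ^ 2 + σ ^ 2 = 1) : (ℝ × ℝ) ≃ᵐ (ℝ × ℝ) where
  toFun p := (ρ * p.1 + σ * p.2, σ * p.1 - ρ * p.2)
  invFun p := (ρ * p.1 + σ * p.2, σ * p.1 - ρ * p.2)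
  left_inv p := by
    obtain ⟨x, y⟩ := p
    simp only [Prod.mk.injEq]
    constructor
    · linear_combination x * h
    · linear_combination y * h
  right_inv p := by
    obtain ⟨x, y⟩ := p
    simp only [Prod.mk.injEq]
    constructor
    · linear_combination x * h
    · linear_combination y * h
  measurable_toFun :=
    ((measurable_fst.const_mul ρ).add (measurable_snd.const_mul σ)).prodMk
      ((measurable_fst.const_mul σ).sub (measurable_snd.const_mul ρ))
  measurable_invFun :=
    ((measurable_fst.const_mul ρ).add (measurable_snd.const_mul σ)).prodMk
      ((measurable_fst.const_mul σ).sub (measurable_snd.const_mul ρ))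

lemma Lequiv_eq_toLin (ρ σ : ℝ) (h : ρ ^ 2 + σ ^ 2 = 1) :
    (Lequiv ρ σ h : ℝ × ℝ → ℝ × ℝ)
      = (Matrix.toLin (Module.Basis.finTwoProd ℝ) (Module.Basis.finTwoProd ℝ) !![ρ, σ; σ, -ρ] :
          (ℝ × ℝ) →ₗ[ℝ] (ℝ × ℝ)) := by
  funext p
  rw [Matrix.toLin_finTwoProd_apply]
  show (ρ * p.1 + σ * p.2, σ * p.1 - ρ * p.2) = _
  simp only [Prod.mk.injEq]
  exact ⟨trivial, by ring⟩

lemma map_L_volume (ρ σ : ℝ) (h : ρ ^ 2 + σ ^ 2 = 1) :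
    Measure.map (Lequiv ρ σ h) (volume : Measure (ℝ × ℝ)) = volume := by
  have hdet : LinearMap.det
      (Matrix.toLin (Module.Basis.finTwoProd ℝ) (Module.Basis.finTwoProd ℝ) !![ρ, σ; σ, -ρ]) = -1 := by
    rw [LinearMap.det_toLin, Matrix.det_fin_two_of]
    linear_combination -h
  have hBorel : (volume : Measure (ℝ × ℝ)).IsAddHaarMeasure := by
    rw [Measure.volume_eq_prod]
    infer_instance
  have := Measure.map_linearMap_addHaar_eq_smul_addHaar (volume : Measure (ℝ × ℝ))
    (f := Matrix.toLin (Module.Basis.finTwoProd ℝ) (Module.Basis.finTwoProd ℝ) !![ρ, σ; σ, -ρ])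
    (by rw [hdet]; norm_num)
  rw [show (Measure.map (Lequiv ρ σ h) (volume : Measure (ℝ × ℝ)))
      = Measure.map (Matrix.toLin (Module.Basis.finTwoProd ℝ) (Module.Basis.finTwoProd ℝ) !![ρ, σ; σ, -ρ])
        (volume : Measure (ℝ × ℝ)) from by rw [← Lequiv_eq_toLin ρ σ h],
    this, hdet]
  norm_num

lemma map_withDensity_equiv {α β : Type*} [MeasurableSpace α] [MeasurableSpace β]
    (e : α ≃ᵐ β) (μ : Measure α) {D : α → ℝ≥0∞} (hD : Measurable D) :
    Measure.map e (μ.withDensity D) = (Measure.map e μ).withDensity (fun b => D (e.symm b)) := by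
  ext s hs
  rw [Measure.map_apply e.measurable hs, withDensity_apply _ (e.measurable hs),
    withDensity_apply _ hs,
    setLIntegral_map (f := fun b => D (e.symm b)) hs (hD.comp e.symm.measurable) e.measurable]
  simp

end RPBaux

open RPBaux in
theorem reconstruction_probability_bound
    {Ω : Type*} [MeasurableSpace Ω] (P : Measure Ω) [IsProbabilityMeasure P]
    (W ε : Ω → ℝ) (hWm : Measurable W) (hεm : Measurable ε)
    (hindep : IndepFun W ε P)
    (hW : P.map W = gaussianReal 0 1) (hε : P.map ε = gaussianReal 0 1)
    (ρ : ℝ) (hρ0 : 0 < ρ) (hρ1 : ρ < 1) (δ : ℝ) (hδ : 0 < δ)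
    (f : ℝ → ℝ) (hf : Measurable f) :
    P {ω | |W ω - f (ρ * W ω + Real.sqrt (1 - ρ ^ 2) * ε ω)| ≤ δ}
      ≤ ENNReal.ofReal (2 * cdf (gaussianReal 0 1) (δ / Real.sqrt (1 - ρ ^ 2)) - 1) ∧
    2 * cdf (gaussianReal 0 1) (δ / Real.sqrt (1 - ρ ^ 2)) - 1 < 1 := by
  have hσpos : 0 < Real.sqrt (1 - ρ ^ 2) := Real.sqrt_pos.mpr (by nlinarith)
  set σ := Real.sqrt (1 - ρ ^ 2) with hσdef
  have hσ2 : σ ^ 2 = 1 - ρ ^ 2 := Real.sq_sqrt (by nlinarith)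
  have h1 : ρ ^ 2 + σ ^ 2 = 1 := by rw [hσ2]; ring
  have hc : 0 < δ / σ := div_pos hδ hσpos
  constructor
  case right => linarith [RPBaux.cdf_lt_one (δ / σ)]
  have hpair : P.map (fun ω => (W ω, ε ω)) = (gaussianReal 0 1).prod (gaussianReal 0 1) := by
    exact ((indepFun_iff_map_prod_eq_prod_map_map hWm.aemeasurable
      hεm.aemeasurable).mp hindep).trans (by rw [hW, hε])
  have hA : MeasurableSet {p : ℝ × ℝ | |p.1 - f (ρ * p.1 + σ * p.2)| ≤ δ} :=
    measurableSet_le ((measurable_fst.sub (hf.comp ((measurable_fst.const_mul ρ).add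
      (measurable_snd.const_mul σ)))).abs) measurable_const
  have hB : MeasurableSet {p : ℝ × ℝ | |ρ * p.1 + σ * p.2 - f p.1| ≤ δ} :=
    measurableSet_le ((((measurable_fst.const_mul ρ).add (measurable_snd.const_mul σ)).sub
      (hf.comp measurable_fst)).abs) measurable_const
  have hset : {ω | |W ω - f (ρ * W ω + σ * ε ω)| ≤ δ}
      = (fun ω => (W ω, ε ω)) ⁻¹' {p : ℝ × ℝ | |p.1 - f (ρ * p.1 + σ * p.2)| ≤ δ} := rfl
  rw [hset, ← Measure.map_apply (hWm.prodMk hεm) hA, hpair]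
  have hDmeas : Measurable fun p : ℝ × ℝ => gaussianPDF 0 1 p.1 * gaussianPDF 0 1 p.2 :=
    ((measurable_gaussianPDF 0 1).comp measurable_fst).mul
      ((measurable_gaussianPDF 0 1).comp measurable_snd)
  have hDsymm : (fun p : ℝ × ℝ =>
        gaussianPDF 0 1 ((Lequiv ρ σ h1).symm p).1 * gaussianPDF 0 1 ((Lequiv ρ σ h1).symm p).2)
      = fun p : ℝ × ℝ => gaussianPDF 0 1 p.1 * gaussianPDF 0 1 p.2 := by
    funext p
    obtain ⟨x, z⟩ := p
    show gaussianPDF 0 1 (ρ * x + σ * z) * gaussianPDF 0 1 (σ * x - ρ * z)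
      = gaussianPDF 0 1 x * gaussianPDF 0 1 z
    simp only [gaussianPDF]
    rw [← ENNReal.ofReal_mul (gaussianPDFReal_nonneg 0 1 _),
      ← ENNReal.ofReal_mul (gaussianPDFReal_nonneg 0 1 _)]
    congr 1
    exact RPBaux.phi_mul (by nlinarith)
  have hmap : Measure.map (Lequiv ρ σ h1) ((gaussianReal 0 1).prod (gaussianReal 0 1))
      = (gaussianReal 0 1).prod (gaussianReal 0 1) := by
    rw [RPBaux.gauss_prod, RPBaux.map_withDensity_equiv _ _ hDmeas,
      RPBaux.map_L_volume ρ σ h1, hDsymm]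
  have hApre : (Lequiv ρ σ h1) ⁻¹' {p : ℝ × ℝ | |p.1 - f (ρ * p.1 + σ * p.2)| ≤ δ}
      = {p : ℝ × ℝ | |ρ * p.1 + σ * p.2 - f p.1| ≤ δ} := by
    ext p
    obtain ⟨x, z⟩ := p
    have harg : ρ * (ρ * x + σ * z) + σ * (σ * x - ρ * z) = x := by linear_combination x * h1
    show |(ρ * x + σ * z) - f (ρ * (ρ * x + σ * z) + σ * (σ * x - ρ * z))| ≤ δ ↔ _
    rw [harg]
    rfl
  calc (gaussianReal 0 1).prod (gaussianReal 0 1) {p : ℝ × ℝ | |p.1 - f (ρ * p.1 + σ * p.2)| ≤ δ}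
      = (gaussianReal 0 1).prod (gaussianReal 0 1) {p : ℝ × ℝ | |ρ * p.1 + σ * p.2 - f p.1| ≤ δ} := by
        conv_lhs => rw [← hmap, Measure.map_apply (Lequiv ρ σ h1).measurable hA, hApre]
    _ = ∫⁻ x, gaussianReal 0 1 (Prod.mk x ⁻¹' {p : ℝ × ℝ | |ρ * p.1 + σ * p.2 - f p.1| ≤ δ})
          ∂(gaussianReal 0 1) := Measure.prod_apply hB
    _ ≤ ∫⁻ _, ENNReal.ofReal (2 * cdf (gaussianReal 0 1) (δ / σ) - 1) ∂(gaussianReal 0 1) := by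
        refine lintegral_mono fun x => ?_
        have hIcc : Prod.mk x ⁻¹' {p : ℝ × ℝ | |ρ * p.1 + σ * p.2 - f p.1| ≤ δ}
            = Set.Icc ((f x - ρ * x - δ) / σ) ((f x - ρ * x + δ) / σ) := by
          ext z
          simp only [Set.mem_preimage, Set.mem_setOf_eq, Set.mem_Icc, abs_le,
            div_le_iff₀ hσpos, le_div_iff₀ hσpos]
          constructor <;> rintro ⟨ha, hb⟩ <;> exact ⟨by linarith, by linarith⟩
        rw [hIcc]
        refine RPBaux.gauss_Icc_le hc _ _ ?_
        field_simp
        ring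
    _ = ENNReal.ofReal (2 * cdf (gaussianReal 0 1) (δ / σ) - 1) := by
        simp
end
end

section
/- Let (Ω, ℙ) be a probability space carrying independent random variables W and ε, each with law N(0,1), let 0 < ρ < 1 and δ > 0, and define X = ρ·W + √(1 − ρ²)·ε. Then the pair (W, X) is not δ-reconstructible: there is no measurable function f : ℝ → ℝ such that |W(ω) − f(X(ω))| ≤ δ for ℙ-almost every ω. -/
open MeasureTheory ProbabilityTheory
open scoped ENNReal NNReal

theorem gaussian_pair_not_delta_reconstructible
    {Ω : Type*} [MeasurableSpace Ω] (P : Measure Ω) [IsProbabilityMeasure P]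
    (W ε : Ω → ℝ) (hWm : Measurable W) (hεm : Measurable ε)
    (hindep : IndepFun W ε P)
    (hW : P.map W = gaussianReal 0 1) (hε : P.map ε = gaussianReal 0 1)
    (ρ : ℝ) (hρ0 : 0 < ρ) (hρ1 : ρ < 1) (δ : ℝ) (hδ : 0 < δ) :
    ¬ ∃ f : ℝ → ℝ, Measurable f ∧
        ∀ᵐ ω ∂P, |W ω - f (ρ * W ω + Real.sqrt (1 - ρ ^ 2) * ε ω)| ≤ δ := by
  rintro ⟨f, hf, hae⟩
  set s : ℝ := Real.sqrt (1 - ρ ^ 2) with hs_def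
  have hs : 0 < s := Real.sqrt_pos.2 (by nlinarith)
  set μ : Measure ℝ := gaussianReal 0 1 with hμ_def
  have hμvol : μ ≪ volume := gaussianReal_absolutelyContinuous 0 one_ne_zero
  have hvolμ : (volume : Measure ℝ) ≪ μ := gaussianReal_absolutelyContinuous' 0 one_ne_zero
  -- joint law is the product measure
  have hpair : P.map (fun ω => (W ω, ε ω)) = μ.prod μ := by
    have h := (indepFun_iff_map_prod_eq_prod_map_map hWm.aemeasurable hεm.aemeasurable).1 hindep
    rw [hW, hε] at h
    exact h
  have hAmeas : MeasurableSet {p : ℝ × ℝ | |p.1 - f (ρ * p.1 + s * p.2)| ≤ δ} := by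
    apply measurableSet_le
    · exact (measurable_fst.sub ((hf.comp ((measurable_const.mul measurable_fst).add
        (measurable_const.mul measurable_snd))))).abs
    · exact measurable_const
  have hA : ∀ᵐ p ∂(μ.prod μ), |p.1 - f (ρ * p.1 + s * p.2)| ≤ δ := by
    rw [← hpair, ae_map_iff (hWm.prodMk hεm).aemeasurable hAmeas]
    exact hae
  have h2 : ∀ᵐ w ∂μ, ∀ᵐ e ∂μ, |w - f (ρ * w + s * e)| ≤ δ := by
    exact Measure.ae_ae_of_ae_prod hA
  -- for a.e. w, the set where f is NOT within δ of w is Lebesgue-null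
  have key : ∀ᵐ w ∂μ, volume {x : ℝ | ¬ |w - f x| ≤ δ} = 0 := by
    filter_upwards [h2] with w hw
    -- hw : ∀ᵐ e ∂μ, |w - f (ρ * w + s * e)| ≤ δ
    have h3 : μ {e : ℝ | ¬ |w - f (ρ * w + s * e)| ≤ δ} = 0 := by
      exact ae_iff.1 hw
    have h4 : volume {e : ℝ | ¬ |w - f (ρ * w + s * e)| ≤ δ} = 0 := hvolμ h3
    -- change variables
    have hset : {e : ℝ | ¬ |w - f (ρ * w + s * e)| ≤ δ}
        = (fun e : ℝ => s * e) ⁻¹' ((fun x : ℝ => ρ * w + x) ⁻¹' {x : ℝ | ¬ |w - f x| ≤ δ}) := by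
      ext e; simp [Set.mem_preimage]
    rw [hset, Real.volume_preimage_mul_left hs.ne'] at h4
    have h5 : volume ((fun x : ℝ => ρ * w + x) ⁻¹' {x : ℝ | ¬ |w - f x| ≤ δ}) = 0 := by
      rcases mul_eq_zero.1 h4 with h | h
      · exact absurd h (by positivity)
      · exact h
    rwa [measure_preimage_add] at h5
  -- extract two good points far apart
  have hbad : μ {w : ℝ | ¬ volume {x : ℝ | ¬ |w - f x| ≤ δ} = 0} = 0 := by
    exact ae_iff.1 key
  obtain ⟨N, hNsub, hNmeas, hNnull⟩ := exists_measurable_superset_of_null hbad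
  have hNvol : volume N = 0 := hvolμ hNnull
  -- Nᶜ has full Lebesgue measure; pick w₁ ∈ Nᶜ, then w₂ ∈ Nᶜ with w₂ > w₁ + 2δ
  have hw1 : ∃ w₁, w₁ ∉ N := by
    by_contra h
    push_neg at h
    have : (Set.univ : Set ℝ) ⊆ N := fun x _ => h x
    have := measure_mono (μ := (volume : Measure ℝ)) this
    rw [hNvol] at this
    simp at this
  obtain ⟨w₁, hw₁⟩ := hw1
  have hw2 : ∃ w₂, w₂ ∉ N ∧ w₁ + 2 * δ < w₂ := by
    by_contra h
    push_neg at h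
    have hsub : Set.Ioi (w₁ + 2 * δ) ⊆ N := fun x hx => by
      by_contra hxN
      exact absurd (h x hxN) (not_le.2 hx)
    have := measure_mono (μ := (volume : Measure ℝ)) hsub
    rw [hNvol] at this
    simp [Real.volume_Ioi] at this
  obtain ⟨w₂, hw₂N, hw₂gt⟩ := hw2
  have hQ1 : volume {x : ℝ | ¬ |w₁ - f x| ≤ δ} = 0 := by
    by_contra h; exact hw₁ (hNsub h)
  have hQ2 : volume {x : ℝ | ¬ |w₂ - f x| ≤ δ} = 0 := by
    by_contra h; exact hw₂N (hNsub h)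
  have hcover : (Set.univ : Set ℝ) ⊆
      {x : ℝ | ¬ |w₁ - f x| ≤ δ} ∪ {x : ℝ | ¬ |w₂ - f x| ≤ δ} := by
    intro x _
    rcases le_or_gt (|w₁ - f x|) δ with h1 | h1
    · rcases le_or_gt (|w₂ - f x|) δ with h2 | h2
      · exfalso
        rw [abs_le] at h1 h2
        linarith [h1.1, h1.2, h2.1, h2.2]
      · exact Or.inr (not_le.2 h2)
    · exact Or.inl (not_le.2 h1)
  have : volume (Set.univ : Set ℝ) = 0 := by
    refine le_antisymm ?_ zero_le
    calc volume (Set.univ : Set ℝ)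
        ≤ volume ({x : ℝ | ¬ |w₁ - f x| ≤ δ} ∪ {x : ℝ | ¬ |w₂ - f x| ≤ δ}) :=
          measure_mono hcover
      _ ≤ volume {x : ℝ | ¬ |w₁ - f x| ≤ δ} + volume {x : ℝ | ¬ |w₂ - f x| ≤ δ} :=
          measure_union_le _ _
      _ = 0 := by rw [hQ1, hQ2, add_zero]
  simp [Real.volume_univ] at this
end
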